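/- Let k, l ≥ 0 and let λ = (1^k,3^l) be the partition of k+3l with k parts equal to 1 and l parts equal to 3. For every partition μ of k+3l, K^{-1}_{(1^k,3^l),μ} = 0 unless μ = (1^a,2^b,3^c) (all parts of μ are at most 3) with c ≤ l; moreover, in that case K^{-1}_{(1^k,3^l),(1^a,2^b,3^c)} = K^{-1}_{(1^k,3^{l−c}),(1^a,2^b)}, an inverse Kostka number of partitions of k+3(l−c). -/

import Mathlib

open Finset MvPolynomial

/-- The `p`-th entry of an `n`-tuple, with default value `0` out of range. -/
def nth (n : ℕ) (f : Fin n → ℕ) (p : ℕ) : ℕ := if h : p < n then f ⟨p, h⟩ else 0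

/-- `a_α = det (x_j ^ α_i)`. -/
noncomputable def aDet (n : ℕ) (α : Fin n → ℕ) : MvPolynomial (Fin n) ℤ :=
  (Matrix.of fun i j : Fin n => (X j : MvPolynomial (Fin n) ℤ) ^ α i).det

/-- `x ^ β = ∏ x_i ^ β_i`. -/
noncomputable def xpow (n : ℕ) (β : Fin n → ℕ) : MvPolynomial (Fin n) ℤ :=
  ∏ i, X i ^ β i

/-- The monomial symmetric polynomial `m_lam(n) = Σ_{w ∈ Sₙ^lam} x^{w(lam)}`:
the sum of `x^β` over all distinct rearrangements `β` of `lam`. -/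
noncomputable def msym (n : ℕ) (lam : Fin n → ℕ) : MvPolynomial (Fin n) ℤ :=
  ∑ β ∈ Finset.univ.image (fun σ : Equiv.Perm (Fin n) => lam ∘ σ), xpow n β

/-- `δ(n) = (0, 1, …, n-1)`. -/
def deltaN (n : ℕ) : Fin n → ℕ := fun i => (i : ℕ)

/-- `P(m∣n)`: partitions of `m` as nondecreasing `n`-tuples (zeros at the beginning). -/
def Par (n m : ℕ) : Finset (Fin n → ℕ) :=
  (Fintype.piFinset fun _ : Fin n => Finset.range (m + 1)).filter
    fun μ => (∀ i j : Fin n, i ≤ j → μ i ≤ μ j) ∧ ∑ i, μ i = m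

/-- `K` is the inverse Kostka matrix in `n` variables: for every weight `m` and
every `lam ∈ P(m∣n)`, `m_lam(n) · a_{δ(n)} = Σ_{μ ∈ P(m∣n)} K lam μ · a_{μ+δ(n)}`
(equivalently `m_lam(n) = Σ_μ K lam μ · s_μ(n)`). -/
def IsInvKostka (n : ℕ) (K : (Fin n → ℕ) → (Fin n → ℕ) → ℤ) : Prop :=
  ∀ m : ℕ, ∀ lam ∈ Par n m,
    msym n lam * aDet n (deltaN n) =
      ∑ μ ∈ Par n m, C (K lam μ) * aDet n (fun i => μ i + (i : ℕ))

/-- The partition `(1^a, 2^b, 3^c)` as a nondecreasing `n`-tuple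
(requires `a + b + c ≤ n`). -/
def tuple3 (n a b c : ℕ) : Fin n → ℕ :=
  fun i => if (i : ℕ) < n - a - b - c then 0
    else if (i : ℕ) < n - b - c then 1
    else if (i : ℕ) < n - c then 2 else 3

/-!
Expanding `m_λ · a_δ = Σ_{β, σ} sign σ · x^{β + σ(δ)}`, where `β` runs over the rearrangements of
`λ`, shows that `K⁻¹_{λ,μ}` is the signed count of the *admissible* permutations `σ`, those for
which `μ + δ - σ(δ)` is a rearrangement of `λ`. When all parts of `λ` are at most `3`, an
admissible `σ` forces the parts of `μ` to be at most `3`; on the block of the top `c` indices,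
where `μ` equals `3`, `σ` can move no index down, so it fixes the block and the rearrangement of
`λ` takes the value `3` there, whence `c ≤ l`. Conjugating by the rotation that carries this
block to the bottom, and replacing its `3`s by `0`s, is then a sign-preserving bijection onto the
admissible permutations for `(1^k, 3^(l-c))` and `(1^a, 2^b)`.
-/

open Equiv

section Coefficients

variable {n : ℕ}

lemma xpow_eq_monomial (β : Fin n → ℕ) :
    xpow n β = monomial (Finsupp.equivFunOnFinite.symm β) 1 := by
  rw [monomial_eq, C_1, one_mul, Finsupp.prod_fintype _ _ (by simp)]
  rfl

lemma coeff_xpow (f β : Fin n → ℕ) :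
    coeff (Finsupp.equivFunOnFinite.symm f) (xpow n β) = if β = f then 1 else 0 := by
  simp [xpow_eq_monomial, coeff_monomial]

lemma xpow_mul_xpow (β γ : Fin n → ℕ) : xpow n β * xpow n γ = xpow n (β + γ) := by
  simp only [xpow, ← prod_mul_distrib, Pi.add_apply, pow_add]

lemma aDet_eq_sum (α : Fin n → ℕ) :
    aDet n α = ∑ σ : Perm (Fin n), (Perm.sign σ : ℤ) • xpow n (α ∘ σ) := by
  simp only [aDet, Matrix.det_apply, Units.smul_def, xpow, Matrix.of_apply, Function.comp_apply]

lemma coeff_aDet (f α : Fin n → ℕ) :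
    coeff (Finsupp.equivFunOnFinite.symm f) (aDet n α)
      = ∑ σ : Perm (Fin n), if α ∘ σ = f then (Perm.sign σ : ℤ) else 0 := by
  simp only [aDet_eq_sum, coeff_sum, coeff_smul, coeff_xpow, smul_eq_mul, mul_ite, mul_one,
    mul_zero]

lemma coeff_aDet_of_strictMono {f α : Fin n → ℕ} (hf : StrictMono f) (hα : StrictMono α) :
    coeff (Finsupp.equivFunOnFinite.symm f) (aDet n α) = if α = f then 1 else 0 := by
  rw [coeff_aDet, Finset.sum_eq_single 1 ?_ (by simp)]
  · simp
  · intro σ _ hσ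
    rw [if_neg]
    rintro rfl
    have hσα : α ∘ σ = α ∘ (1 : Perm (Fin n)) :=
      Tuple.unique_monotone hf.monotone (by simpa using hα.monotone)
    exact hσ (Equiv.ext fun i => hα.injective (congrFun hσα i))

def Admissible (lam μ : Fin n → ℕ) (σ : Perm (Fin n)) : Prop :=
  ∃ τ : Perm (Fin n), ∀ i, μ i + i = lam (τ i) + σ i

instance (lam μ : Fin n → ℕ) : DecidablePred (Admissible lam μ) :=
  fun _ => inferInstanceAs (Decidable (∃ _, _))

lemma coeff_msym_mul_aDet_delta (lam μ : Fin n → ℕ) :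
    coeff (Finsupp.equivFunOnFinite.symm fun i => μ i + i) (msym n lam * aDet n (deltaN n))
      = ∑ σ ∈ univ.filter (Admissible lam μ), (Perm.sign σ : ℤ) := by
  simp only [msym, aDet_eq_sum, sum_mul_sum, coeff_sum]
  rw [sum_comm, sum_filter]
  refine sum_congr rfl fun σ _ => ?_
  simp only [mul_smul_comm, coeff_smul, xpow_mul_xpow, coeff_xpow, smul_eq_mul,
    mul_ite, mul_one, mul_zero]
  have hadm : Admissible lam μ σ ↔ ∃ β ∈ univ.image fun τ : Perm (Fin n) => lam ∘ τ,
      β + deltaN n ∘ σ = fun i => μ i + i := by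
    simp only [Admissible, mem_image, mem_univ, true_and, exists_exists_eq_and]
    simp only [funext_iff, Pi.add_apply, Function.comp_apply, deltaN, eq_comm]
  split_ifs with h
  · obtain ⟨β₀, hβ₀, hβ₀σ⟩ := hadm.1 h
    rw [sum_eq_single_of_mem β₀ hβ₀ fun β _ hβ => if_neg fun hβσ =>
      hβ (add_right_cancel (hβσ.trans hβ₀σ.symm)), if_pos hβ₀σ]
  · exact sum_eq_zero fun β hβ => if_neg fun hβσ => h (hadm.2 ⟨β, hβ, hβσ⟩)

lemma monotone_of_mem_Par {m : ℕ} {μ : Fin n → ℕ} (hμ : μ ∈ Par n m) : Monotone μ :=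
  fun i j hij => (mem_filter.1 hμ).2.1 i j hij

lemma IsInvKostka.apply_eq {K : (Fin n → ℕ) → (Fin n → ℕ) → ℤ} (hK : IsInvKostka n K) {m : ℕ}
    {lam μ : Fin n → ℕ} (hlam : lam ∈ Par n m) (hμ : μ ∈ Par n m) :
    K lam μ = ∑ σ ∈ univ.filter (Admissible lam μ), (Perm.sign σ : ℤ) := by
  have hδ : ∀ ν ∈ Par n m, StrictMono fun i : Fin n => ν i + (i : ℕ) := fun ν hν _ _ hij =>
    add_lt_add_of_le_of_lt (monotone_of_mem_Par hν hij.le) hij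
  have h := congrArg (coeff (Finsupp.equivFunOnFinite.symm fun i => μ i + i)) (hK m lam hlam)
  rw [coeff_msym_mul_aDet_delta, coeff_sum] at h
  rw [h, Finset.sum_eq_single_of_mem μ hμ]
  · rw [coeff_C_mul, coeff_aDet_of_strictMono (hδ μ hμ) (hδ μ hμ), if_pos rfl, mul_one]
  · intro ν hν hνμ
    rw [coeff_C_mul, coeff_aDet_of_strictMono (hδ μ hμ) (hδ ν hν), if_neg, mul_zero]
    intro h
    exact hνμ (funext fun i => by simpa using congrFun h i)

end Coefficients

section Rearrangement

variable {ι α : Type*}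

def IsExchange [DecidableEq ι] (S : Finset ι) (x y : α) (f g : ι → α) : Prop :=
  (∀ i ∉ S, f i = g i) ∧ ∀ i ∈ S, f i = x ∧ g i = y

lemma IsExchange.symm [DecidableEq ι] {S : Finset ι} {x y : α} {f g : ι → α}
    (h : IsExchange S x y f g) : IsExchange S y x g f :=
  ⟨fun i hi => (h.1 i hi).symm, fun i hi => (h.2 i hi).symm⟩

variable [Fintype ι] [DecidableEq α]

lemma card_fiber_comp_perm (g : ι → α) (τ : Perm ι) (v : α) :
    #{i | g (τ i) = v} = #{i | g i = v} := by
  rw [← Fintype.card_subtype, ← Fintype.card_subtype]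
  exact Fintype.card_congr (τ.subtypeEquiv fun _ => Iff.rfl)

lemma exists_perm_of_card_fiber_eq {f g : ι → α} (h : ∀ v, #{i | f i = v} = #{i | g i = v}) :
    ∃ τ : Perm ι, f = g ∘ τ :=
  ⟨ofFiberEquiv fun v => Fintype.equivOfCardEq (by simp only [Fintype.card_subtype, h]),
    funext fun i => (ofFiberEquiv_map _ i).symm⟩

variable [DecidableEq ι] {S : Finset ι} {x y : α} {f g f' g' : ι → α}

lemma card_fiber_eq_card_fiber_compl_add (hf : ∀ i ∈ S, f i = x) (v : α) :
    #{i | f i = v} = #{i | i ∉ S ∧ f i = v} + if v = x then #S else 0 := by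
  have hS : ({i | f i = v} : Finset ι).filter (· ∈ S) = if v = x then S else ∅ := by
    ext i
    have := hf i
    split_ifs with hv <;> simp only [mem_filter, mem_univ, true_and] <;> grind
  rw [← card_filter_add_card_filter_not (s := {i | f i = v}) (· ∈ S), hS,
    filter_filter, add_comm]
  split_ifs <;> simp only [card_empty, and_comm]

lemma IsExchange.card_fiber_add (h : IsExchange S x y f g) (v : α) :
    #{i | f i = v} + (if v = y then #S else 0) = #{i | g i = v} + (if v = x then #S else 0) := by
  rw [card_fiber_eq_card_fiber_compl_add (fun i hi => (h.2 i hi).1),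
    card_fiber_eq_card_fiber_compl_add (fun i hi => (h.2 i hi).2),
    Finset.filter_congr fun i _ => and_congr_right fun hi => by rw [h.1 i hi]]
  ring

lemma IsExchange.exists_perm (h : IsExchange S x y f g) (h' : IsExchange S x y f' g')
    (hf : ∃ τ : Perm ι, f = f' ∘ τ) : ∃ τ : Perm ι, g = g' ∘ τ := by
  obtain ⟨τ, rfl⟩ := hf
  refine exists_perm_of_card_fiber_eq fun v => ?_
  have e := h.card_fiber_add v
  have e' := h'.card_fiber_add v
  rw [Function.comp_def, card_fiber_comp_perm f' τ v] at e
  omega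

end Rearrangement

section FixedPoints

lemma Equiv.Perm.sum_comp_of_mapsTo {ι M : Type*} [DecidableEq ι] [AddCommMonoid M]
    (σ : Perm ι) {S : Finset ι} (hS : ∀ i ∈ S, σ i ∈ S) (w : ι → M) :
    ∑ i ∈ S, w (σ i) = ∑ i ∈ S, w i := by
  have himage : S.image σ = S := Finset.eq_of_subset_of_card_le (image_subset_iff.2 hS)
    (card_image_of_injective S σ.injective).ge
  rw [← sum_image σ.injective.injOn, himage]

lemma Equiv.Perm.apply_notMem_of_eqOn {ι : Type*} (σ : Perm ι) {S : Finset ι}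
    (hS : ∀ i ∈ S, σ i = i) (i : ι) (hi : i ∉ S) : σ i ∉ S :=
  fun hσi => hi (σ.injective (hS _ hσi) ▸ hσi)

variable {n : ℕ}

lemma Equiv.Perm.apply_eq_self_of_le_apply (σ : Perm (Fin n)) {S : Finset (Fin n)}
    (hS : ∀ i ∈ S, σ i ∈ S) (hle : ∀ i ∈ S, i ≤ σ i) (i : Fin n) (hi : i ∈ S) : σ i = i :=
  Fin.ext ((sum_eq_sum_iff_of_le fun j hj => Fin.val_le_of_le (hle j hj)).1
    (σ.sum_comp_of_mapsTo hS Fin.val).symm i hi).symm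

lemma Equiv.Perm.apply_eq_self_of_apply_le (σ : Perm (Fin n)) {S : Finset (Fin n)}
    (hS : ∀ i ∈ S, σ i ∈ S) (hle : ∀ i ∈ S, σ i ≤ i) (i : Fin n) (hi : i ∈ S) : σ i = i :=
  Fin.ext ((sum_eq_sum_iff_of_le fun j hj => Fin.val_le_of_le (hle j hj)).1
    (σ.sum_comp_of_mapsTo hS Fin.val) i hi)

def topBlock (n c : ℕ) : Finset (Fin n) := {i | n - c ≤ (i : ℕ)}

@[simp] lemma mem_topBlock {c : ℕ} {i : Fin n} : i ∈ topBlock n c ↔ n - c ≤ (i : ℕ) := by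
  simp [topBlock]

lemma apply_eq_self_of_eq_max {μ β : Fin n → ℕ} {σ : Perm (Fin n)} {M c : ℕ}
    (hβ : ∀ i, β i ≤ M) (hμ : ∀ i ∈ topBlock n c, μ i = M)
    (E : ∀ i, μ i + i = β i + σ i) (i : Fin n) (hi : i ∈ topBlock n c) : σ i = i ∧ β i = M := by
  have hle : ∀ j ∈ topBlock n c, j ≤ σ j := fun j hj => by
    have := E j; have := hμ j hj; have := hβ j; rw [Fin.le_def]; omega
  have hσ := σ.apply_eq_self_of_le_apply (fun j hj => mem_topBlock.2
    ((mem_topBlock.1 hj).trans (hle j hj))) hle i hi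
  refine ⟨hσ, ?_⟩
  have := E i
  rw [hσ, hμ i hi] at this
  omega

end FixedPoints

section Rotation

variable {n : ℕ}

def rotate (n c : ℕ) : Equiv.Perm (Fin n) where
  toFun i := ⟨if (i : ℕ) < n - c then i + c else i - (n - c), by split_ifs <;> omega⟩
  invFun j := ⟨if c ≤ (j : ℕ) then j - c else j + (n - c), by split_ifs <;> omega⟩
  left_inv i := by ext; dsimp only; split_ifs <;> omega
  right_inv j := by ext; dsimp only; split_ifs <;> omega

lemma rotate_val (c : ℕ) (i : Fin n) :
    (rotate n c i : ℕ) = if (i : ℕ) < n - c then i + c else i - (n - c) := rfl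

lemma admissible_conj_iff {lam μ : Fin n → ℕ} (ρ σ : Perm (Fin n)) :
    Admissible lam μ (ρ * σ * ρ⁻¹) ↔ ∃ τ : Perm (Fin n), ∀ i, μ (ρ i) + ρ i = lam (τ i) + ρ (σ i) :=
  ⟨fun ⟨τ, h⟩ => ⟨τ * ρ, fun i => by simpa using h (ρ i)⟩,
    fun ⟨τ, h⟩ => ⟨τ * ρ⁻¹, fun j => by simpa using h (ρ⁻¹ j)⟩⟩

variable {c M : ℕ} {lam lam' μ μ' : Fin n → ℕ} {σ : Perm (Fin n)}

theorem Admissible.conj_rotate (hlam : ∀ i, lam i ≤ M)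
    (hL : IsExchange (topBlock n c) M 0 lam (lam' ∘ rotate n c))
    (hμ : IsExchange (topBlock n c) M 0 μ (μ' ∘ rotate n c)) (h : Admissible lam μ σ) :
    Admissible lam' μ' (rotate n c * σ * (rotate n c)⁻¹) := by
  obtain ⟨τ, E⟩ := h
  have top := apply_eq_self_of_eq_max (fun i => hlam (τ i)) (fun i hi => (hμ.2 i hi).1) E
  set g : Fin n → ℕ := fun i => if i ∈ topBlock n c then 0 else lam (τ i) with hg
  have hgx : IsExchange (topBlock n c) M 0 (lam ∘ τ) g :=
    ⟨fun i hi => by simp only [hg, Function.comp_apply, if_neg hi],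
      fun i hi => ⟨(top i hi).2, by simp only [hg, if_pos hi]⟩⟩
  obtain ⟨τ', hτ'⟩ := hgx.exists_perm hL ⟨τ, rfl⟩
  refine (admissible_conj_iff _ _).2 ⟨rotate n c * τ', fun i => ?_⟩
  have hgi : g i = lam' (rotate n c (τ' i)) := congrFun hτ' i
  rw [Perm.mul_apply, ← hgi, hg]
  by_cases hi : i ∈ topBlock n c
  · simp only [(top i hi).1, if_pos hi, zero_add]
    simpa using (hμ.2 i hi).2
  · have hσi := σ.apply_notMem_of_eqOn (fun j hj => (top j hj).1) i hi
    have hEi := E i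
    have hμi := hμ.1 i hi
    simp only [mem_topBlock, not_le, Function.comp_apply] at hi hσi hμi
    simp only [if_neg (not_le.2 hi), rotate_val, hi, hσi, if_true, mem_topBlock]
    omega

theorem Admissible.of_conj_rotate (hL : IsExchange (topBlock n c) M 0 lam (lam' ∘ rotate n c))
    (hμ : IsExchange (topBlock n c) M 0 μ (μ' ∘ rotate n c))
    (h : Admissible lam' μ' (rotate n c * σ * (rotate n c)⁻¹)) : Admissible lam μ σ := by
  obtain ⟨τ, E⟩ := (admissible_conj_iff _ _).1 h
  have topσ : ∀ i ∈ topBlock n c, σ i ∈ topBlock n c ∧ σ i ≤ i := fun i hi => by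
    have hEi := E i
    have hμi := (hμ.2 i hi).2
    simp only [mem_topBlock, Function.comp_apply, rotate_val, Fin.le_def] at hi hEi hμi ⊢
    split_ifs at hEi <;> omega
  have top : ∀ i ∈ topBlock n c, σ i = i :=
    σ.apply_eq_self_of_apply_le (fun i hi => (topσ i hi).1) (fun i hi => (topσ i hi).2)
  set β : Fin n → ℕ := fun i => if i ∈ topBlock n c then M else lam' (τ i) with hβ
  have hβx : IsExchange (topBlock n c) M 0 β (lam' ∘ τ) := by
    refine ⟨fun i hi => by simp only [hβ, Function.comp_apply, if_neg hi],
      fun i hi => ⟨by simp only [hβ, if_pos hi], ?_⟩⟩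
    have hEi := E i
    have hμi := (hμ.2 i hi).2
    rw [top i hi] at hEi
    simp only [Function.comp_apply] at hμi ⊢
    omega
  obtain ⟨τ₀, hτ₀⟩ := hβx.symm.exists_perm hL.symm ⟨(rotate n c)⁻¹ * τ, by ext; simp⟩
  refine ⟨τ₀, fun i => ?_⟩
  have hβi : β i = lam (τ₀ i) := congrFun hτ₀ i
  rw [← hβi, hβ]
  by_cases hi : i ∈ topBlock n c
  · simp only [top i hi, if_pos hi, (hμ.2 i hi).1]
  · have hσi := σ.apply_notMem_of_eqOn top i hi
    have hEi := E i
    have hμi := hμ.1 i hi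
    simp only [if_neg hi]
    simp only [mem_topBlock, not_le, Function.comp_apply] at hi hσi hμi
    simp only [rotate_val, hi, hσi, if_true] at hEi
    omega

theorem sum_sign_admissible_eq_of_isExchange (hlam : ∀ i, lam i ≤ M)
    (hL : IsExchange (topBlock n c) M 0 lam (lam' ∘ rotate n c))
    (hμ : IsExchange (topBlock n c) M 0 μ (μ' ∘ rotate n c)) :
    ∑ σ ∈ univ.filter (Admissible lam μ), (Perm.sign σ : ℤ)
      = ∑ σ ∈ univ.filter (Admissible lam' μ'), (Perm.sign σ : ℤ) := by
  refine Finset.sum_equiv (MulAut.conj (rotate n c)).toEquiv (fun σ => ?_) (fun σ _ => ?_)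
  · simp only [mem_filter, mem_univ, true_and, MulEquiv.toEquiv_eq_coe, MulEquiv.coe_toEquiv,
      MulAut.conj_apply]
    exact ⟨Admissible.conj_rotate hlam hL hμ, Admissible.of_conj_rotate hL hμ⟩
  · rw [MulEquiv.toEquiv_eq_coe, MulEquiv.coe_toEquiv, MulAut.conj_apply, Perm.sign_mul,
      Perm.sign_mul, Perm.sign_inv, mul_right_comm, Int.units_mul_self, one_mul]

end Rotation

section Tuple3

variable {n : ℕ}

lemma card_topBlock (c : ℕ) : #(topBlock n c) = min c n := by
  have h := card_filter_add_card_filter_not (s := univ) (fun i : Fin n => (i : ℕ) < n - c)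
  simp only [Fin.card_filter_val_lt, not_lt, card_univ, Fintype.card_fin] at h
  rw [topBlock]
  omega

lemma tuple3_eq_three_iff {a b c : ℕ} {i : Fin n} : tuple3 n a b c i = 3 ↔ i ∈ topBlock n c := by
  rw [mem_topBlock, tuple3]
  constructor
  · intro h
    split_ifs at h <;> omega
  · intro h
    split_ifs <;> omega

lemma tuple3_le_three (a b c : ℕ) (i : Fin n) : tuple3 n a b c i ≤ 3 := by
  simp only [tuple3]
  split_ifs <;> omega

lemma tuple3_eq_add (a b c : ℕ) (i : Fin n) : tuple3 n a b c i =
    (if i ∈ topBlock n (a + b + c) then 1 else 0) + (if i ∈ topBlock n (b + c) then 1 else 0)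
      + (if i ∈ topBlock n c then 1 else 0) := by
  simp only [tuple3, mem_topBlock]
  split_ifs <;> omega

lemma sum_tuple3 {a b c : ℕ} (h : a + b + c ≤ n) : ∑ i, tuple3 n a b c i = a + 2 * b + 3 * c := by
  simp only [tuple3_eq_add, sum_add_distrib, sum_boole, filter_mem_eq_inter, univ_inter,
    card_topBlock, Nat.cast_id]
  omega

lemma tuple3_mem_Par {a b c m : ℕ} (h : a + b + c ≤ n) (hm : a + 2 * b + 3 * c = m) :
    tuple3 n a b c ∈ Par n m := by
  rw [← hm]
  refine mem_filter.2 ⟨Fintype.mem_piFinset.2 fun i => mem_range.2 ?_, fun i j hij => ?_,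
    sum_tuple3 h⟩
  · exact Nat.lt_succ_of_le ((single_le_sum (fun j _ => Nat.zero_le _) (mem_univ i)).trans_eq
      (sum_tuple3 h))
  · rw [Fin.le_def] at hij
    simp only [tuple3]
    split_ifs <;> omega

lemma tuple3_isExchange {a b c d : ℕ} (hd : d ≤ c) (h : a + b + c ≤ n) :
    IsExchange (topBlock n d) 3 0 (tuple3 n a b c) (tuple3 n a b (c - d) ∘ rotate n d) := by
  refine ⟨fun i hi => ?_, fun i hi => ⟨tuple3_eq_three_iff.2 ?_, ?_⟩⟩
  · simp only [mem_topBlock, not_le] at hi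
    simp only [Function.comp_apply, tuple3, rotate_val, if_pos hi]
    split_ifs <;> omega
  · simp only [mem_topBlock] at hi ⊢
    omega
  · simp only [mem_topBlock] at hi
    simp only [Function.comp_apply, tuple3, rotate_val]
    split_ifs <;> omega

lemma Monotone.le_iff_lt_card {μ : Fin n → ℕ} (hμ : Monotone μ) (v : ℕ) (i : Fin n) :
    μ i ≤ v ↔ (i : ℕ) < #{j | μ j ≤ v} := by
  constructor
  · intro hi
    have hsub : Iic i ⊆ ({j | μ j ≤ v} : Finset (Fin n)) := fun j hj =>
      mem_filter.2 ⟨mem_univ j, (hμ (mem_Iic.1 hj)).trans hi⟩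
    have := card_le_card hsub
    rw [Fin.card_Iic] at this
    omega
  · intro hi
    by_contra! hv
    have hsub : ({j | μ j ≤ v} : Finset (Fin n)) ⊆ Iio i := fun j hj =>
      mem_Iio.2 (lt_of_not_ge fun hij => by
        have := hμ hij
        simp only [mem_filter, mem_univ, true_and] at hj
        omega)
    have := card_le_card hsub
    rw [Fin.card_Iio] at this
    omega

lemma Monotone.exists_eq_tuple3 {μ : Fin n → ℕ} (hμ : Monotone μ) (h3 : ∀ i, μ i ≤ 3) :
    ∃ a b c, a + b + c ≤ n ∧ μ = tuple3 n a b c := by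
  have ht : ∀ v, #{j | μ j ≤ v} ≤ #{j | μ j ≤ v + 1} := fun v =>
    card_le_card fun j hj => by simp only [mem_filter, mem_univ, true_and] at hj ⊢; omega
  obtain ⟨t₀, t₁, t₂, h₀₁, h₁₂, h₂, hμt⟩ : ∃ t₀ t₁ t₂, t₀ ≤ t₁ ∧ t₁ ≤ t₂ ∧ t₂ ≤ n ∧ ∀ i : Fin n,
      (μ i ≤ 0 ↔ (i : ℕ) < t₀) ∧ (μ i ≤ 1 ↔ (i : ℕ) < t₁) ∧ (μ i ≤ 2 ↔ (i : ℕ) < t₂) :=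
    ⟨_, _, _, ht 0, ht 1, (card_filter_le _ _).trans_eq (card_fin n), fun i =>
      ⟨hμ.le_iff_lt_card 0 i, hμ.le_iff_lt_card 1 i, hμ.le_iff_lt_card 2 i⟩⟩
  refine ⟨t₁ - t₀, t₂ - t₁, n - t₂, by omega, funext fun i => ?_⟩
  obtain ⟨h₀, h₁, h₂⟩ := hμt i
  have := h3 i
  simp only [tuple3]
  split_ifs <;> omega

end Tuple3

lemma Admissible.le_of_monotone {n M : ℕ} {lam μ : Fin n → ℕ} {σ : Perm (Fin n)}
    (h : Admissible lam μ σ) (hlam : ∀ i, lam i ≤ M) (hμ : Monotone μ) (i : Fin n) : μ i ≤ M := by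
  obtain ⟨τ, E⟩ := h
  have hi := i.isLt
  let last : Fin n := ⟨n - 1, by omega⟩
  have hlast : μ last + (n - 1) = lam (τ last) + σ last := E last
  have := hμ (show i ≤ last from Fin.le_def.2 (Nat.le_sub_one_of_lt hi))
  have := hlam (τ last)
  have := (σ last).isLt
  omega

lemma Admissible.exists_eq_tuple3 {n k l : ℕ} {μ : Fin n → ℕ} {σ : Perm (Fin n)}
    (h : Admissible (tuple3 n k 0 l) μ σ) (hμ : Monotone μ) :
    ∃ a b c : ℕ, c ≤ l ∧ μ = tuple3 n a b c := by
  obtain ⟨a, b, c, habc, rfl⟩ := hμ.exists_eq_tuple3 (h.le_of_monotone (tuple3_le_three k 0 l) hμ)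
  refine ⟨a, b, c, ?_, rfl⟩
  obtain ⟨τ, E⟩ := h
  have htop := apply_eq_self_of_eq_max (tuple3_le_three k 0 l <| τ ·)
    (fun i hi => tuple3_eq_three_iff.2 hi) E
  have hcard := card_le_card (s := topBlock n c) (t := {i | tuple3 n k 0 l (τ i) = 3})
    fun i hi => mem_filter.2 ⟨mem_univ i, (htop i hi).2⟩
  rw [card_fiber_comp_perm (tuple3 n k 0 l) τ 3] at hcard
  simp only [tuple3_eq_three_iff, filter_mem_eq_inter, univ_inter, card_topBlock] at hcard
  omega

/-- `K⁻¹_{(1^k,3^l),μ} = 0` unless `μ = (1^a,2^b,3^c)` with `c ≤ l`, in which case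
`K⁻¹_{(1^k,3^l),(1^a,2^b,3^c)} = K⁻¹_{(1^k,3^{l-c}),(1^a,2^b)}`. -/
theorem stmt16 (n k l : ℕ) (hn : k + 3 * l ≤ n)
    (K : (Fin n → ℕ) → (Fin n → ℕ) → ℤ) (hK : IsInvKostka n K) :
    (∀ μ ∈ Par n (k + 3 * l),
        (¬ ∃ a b c : ℕ, c ≤ l ∧ μ = tuple3 n a b c) → K (tuple3 n k 0 l) μ = 0) ∧
    ∀ a b c : ℕ, c ≤ l → a + 2 * b + 3 * c = k + 3 * l →
      K (tuple3 n k 0 l) (tuple3 n a b c)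
        = K (tuple3 n k 0 (l - c)) (tuple3 n a b 0) := by
  have hlam : tuple3 n k 0 l ∈ Par n (k + 3 * l) := tuple3_mem_Par (by omega) (by omega)
  refine ⟨fun μ hμ hμl => ?_, fun a b c hcl hsum => ?_⟩
  · rw [hK.apply_eq hlam hμ]
    exact sum_eq_zero fun σ hσ =>
      (hμl ((mem_filter.1 hσ).2.exists_eq_tuple3 (monotone_of_mem_Par hμ))).elim
  · have hμ : tuple3 n a b c ∈ Par n (k + 3 * l) := tuple3_mem_Par (by omega) hsum
    have hlam' : tuple3 n k 0 (l - c) ∈ Par n (a + 2 * b) := tuple3_mem_Par (by omega) (by omega)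
    have hμ' : tuple3 n a b 0 ∈ Par n (a + 2 * b) := tuple3_mem_Par (by omega) (by omega)
    rw [hK.apply_eq hlam hμ, hK.apply_eq hlam' hμ']
    exact sum_sign_admissible_eq_of_isExchange (tuple3_le_three k 0 l)
      (tuple3_isExchange hcl (by omega))
      (by simpa only [Nat.sub_self] using tuple3_isExchange le_rfl (by omega))
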